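/- arXiv:1304.0228 — 2 statements merged into one kernel-verified Lean document; each statement's English description precedes it below -/
import Mathlib

section
/- Let 1 < k < n−1. A subset X of G is a maximal A-subset if and only if it has one of the following four forms: (1) X = {(S,U) ∈ G : U ⊆ T} for some k-dimensional subspace S and some (n−k+1)-dimensional subspace T with S + T = V; (2) X = {(S,U) ∈ G : T ⊆ U} for some k-dimensional subspace S and some (n−k−1)-dimensional subspace T with S ∩ T = 0; (3) X = {(S,U) ∈ G : S ⊆ T} for some (k+1)-dimensional subspace T and some (n−k)-dimensional subspace U with T + U = V; (4) X = {(S,U) ∈ G : T ⊆ S} for some (k−1)-dimensional subspace T and some (n−k)-dimensional subspace U with T ∩ U = 0. -/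
open Module

variable (K V : Type*) [DivisionRing K] [AddCommGroup V] [Module K V]

/-- Two subspaces `P`, `T` are adjacent: `dim P = dim T = dim (P ⊓ T) + 1`. -/
def SubAdj (P T : Submodule K V) : Prop :=
  finrank K P = finrank K T ∧ finrank K P = finrank K ↥(P ⊓ T) + 1

/-- Two subspaces are complementary. -/
def ComplSub (S U : Submodule K V) : Prop := S ⊓ U = ⊥ ∧ S ⊔ U = ⊤

/-- The set 𝒢 of pairs of complementary subspaces of dimensions `k` and `n - k`. -/
def GSet (n k : ℕ) : Set (Submodule K V × Submodule K V) :=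
  {p | finrank K p.1 = k ∧ finrank K p.2 = n - k ∧ ComplSub K V p.1 p.2}

/-- Adjacency of pairs. -/
def PairAdj (p q : Submodule K V × Submodule K V) : Prop :=
  (p.1 = q.1 ∧ SubAdj K V p.2 q.2) ∨ (SubAdj K V p.1 q.1 ∧ p.2 = q.2)

/-- Closeness of pairs. -/
def PairClose (p q : Submodule K V × Submodule K V) : Prop :=
  (p.1 = q.1 ∧ p.2 ≠ q.2) ∨ (p.1 ≠ q.1 ∧ p.2 = q.2)

/-- An A-subset: a subset of 𝒢 any two distinct elements of which are adjacent. -/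
def IsASubset (n k : ℕ) (X : Set (Submodule K V × Submodule K V)) : Prop :=
  X ⊆ GSet K V n k ∧ ∀ p ∈ X, ∀ q ∈ X, p ≠ q → PairAdj K V p q

/-- A maximal A-subset: an A-subset not properly contained in any A-subset. -/
def IsMaxASubset (n k : ℕ) (X : Set (Submodule K V × Submodule K V)) : Prop :=
  IsASubset K V n k X ∧ ¬ ∃ Y, IsASubset K V n k Y ∧ X ⊂ Y

/-!
With one coordinate fixed, an A-subset is a family of pairwise adjacent complements of a fixed
subspace `F`. Pairwise adjacent `m`-dimensional subspaces either all lie in the join of two of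
them or all contain their meet, so a maximal A-subset sits inside a *top* (the complements of `F`
contained in an `(m+1)`-space `T` with `F ⊔ T = ⊤`) or a *star* (those containing an
`(m-1)`-space `T` with `F ⊓ T = ⊥`). Both are maximal. A complement `U'` adjacent to every member
of a top without lying in `T` would meet every member in the nonzero space `U' ⊓ T`, but the
exchange `U ↦ W ⊔ K ∙ (w + f)` (with `U = W ⊕ K ∙ w` and `0 ≠ f ∈ F ⊓ T`) produces a member
avoiding any given `w`. A complement adjacent to every member of a star without containing `T`
would force all members into `U' ⊔ T`, a proper subspace when `dim F ≥ 2`, whereas the members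
`T ⊔ K ∙ v` cover all vectors off `F ⊔ T`. Two distinct pairs of an A-subset share a coordinate,
and swapping coordinates exchanges `k` and `n - k`, which yields the four families.
-/

theorem Submodule.exists_notMem_and_notMem {R M : Type*} [Ring R] [AddCommGroup M] [Module R M]
    {A B : Submodule R M} (hA : A ≠ ⊤) (hB : B ≠ ⊤) : ∃ v, v ∉ A ∧ v ∉ B := by
  obtain ⟨x, hx⟩ := SetLike.exists_not_mem_of_ne_top A hA
  obtain ⟨y, hy⟩ := SetLike.exists_not_mem_of_ne_top B hB
  by_cases hxB : x ∈ B
  · by_cases hyA : y ∈ A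
    · refine ⟨x + y, fun h => hx ?_, fun h => hy ?_⟩
      · simpa using A.sub_mem h hyA
      · simpa using B.sub_mem h hxB
    · exact ⟨y, hyA, hy⟩
  · exact ⟨x, hx, hxB⟩

variable {K V}

theorem Submodule.exists_mem_ne_zero_of_finrank_pos {W : Submodule K V} (h : 0 < finrank K W) :
    ∃ w ∈ W, w ≠ 0 :=
  W.exists_mem_ne_zero_of_ne_bot fun hW => by subst hW; simp at h

theorem SubAdj.symm {P Q : Submodule K V} (h : SubAdj K V P Q) : SubAdj K V Q P := by
  obtain ⟨h₁, h₂⟩ := h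
  exact ⟨h₁.symm, by rw [inf_comm]; omega⟩

theorem SubAdj.ne {P Q : Submodule K V} (h : SubAdj K V P Q) : P ≠ Q := by
  rintro rfl
  have := h.2
  rw [inf_idem] at this
  omega

section Adjacency

variable [FiniteDimensional K V]

theorem SubAdj.finrank_sup {P Q : Submodule K V} (h : SubAdj K V P Q) :
    finrank K ↥(P ⊔ Q) = finrank K P + 1 := by
  have := Submodule.finrank_sup_add_finrank_inf_eq P Q
  obtain ⟨h₁, h₂⟩ := h
  omega

theorem sup_eq_of_finrank_add_one {A B C : Submodule K V} (hA : A ≤ C) (hB : B ≤ C)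
    (hAC : finrank K A + 1 = finrank K C) (hBC : finrank K B + 1 = finrank K C) (hAB : A ≠ B) :
    A ⊔ B = C := by
  refine Submodule.eq_of_le_of_finrank_le (sup_le hA hB) ?_
  have hlt : A < A ⊔ B := left_lt_sup.2 fun hBA =>
    hAB (Submodule.eq_of_le_of_finrank_eq hBA (by omega)).symm
  have := Submodule.finrank_lt_finrank_of_lt hlt
  omega

theorem subAdj_of_le {P Q T : Submodule K V} (hPQ : finrank K P = finrank K Q)
    (hT : finrank K T = finrank K P + 1) (hP : P ≤ T) (hQ : Q ≤ T) (hne : P ≠ Q) :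
    SubAdj K V P Q := by
  have hsup := sup_eq_of_finrank_add_one hP hQ (by omega) (by omega) hne
  have := Submodule.finrank_sup_add_finrank_inf_eq P Q
  rw [hsup] at this
  exact ⟨hPQ, by omega⟩

theorem subAdj_of_ge {P Q T : Submodule K V} (hPQ : finrank K P = finrank K Q)
    (hT : finrank K T + 1 = finrank K P) (hP : T ≤ P) (hQ : T ≤ Q) (hne : P ≠ Q) :
    SubAdj K V P Q := by
  have hlt : P ⊓ Q < P := inf_lt_left.2 fun hPQ' =>
    hne (Submodule.eq_of_le_of_finrank_eq hPQ' hPQ)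
  have h₁ := Submodule.finrank_lt_finrank_of_lt hlt
  have h₂ := Submodule.finrank_mono (le_inf hP hQ)
  exact ⟨hPQ, by omega⟩

theorem inf_le_or_le_sup_of_subAdj {P Q R : Submodule K V} (hPQ : SubAdj K V P Q)
    (hPR : SubAdj K V P R) (hQR : SubAdj K V Q R) : P ⊓ Q ≤ R ∨ R ≤ P ⊔ Q := by
  refine or_iff_not_imp_left.2 fun hPQR => ?_
  have hRP := hPR.symm.2
  have hRQ := hQR.symm.2
  have hne : R ⊓ P ≠ R ⊓ Q := fun h => hPQR <| by
    have hle : R ⊓ P ≤ P ⊓ Q := le_inf inf_le_right (h ▸ inf_le_right)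
    have heq := Submodule.eq_of_le_of_finrank_eq hle (by have := hPQ.2; have := hPR.1; omega)
    exact heq ▸ inf_le_left
  calc R = R ⊓ P ⊔ R ⊓ Q :=
        (sup_eq_of_finrank_add_one inf_le_left inf_le_left hRP.symm hRQ.symm hne).symm
    _ ≤ P ⊔ Q := sup_le_sup inf_le_right inf_le_right

theorem Set.Pairwise.forall_le_sup_or_forall_inf_le {𝒴 : Set (Submodule K V)}
    (h𝒴 : 𝒴.Pairwise (SubAdj K V)) {U₁ U₂ : Submodule K V} (h₁ : U₁ ∈ 𝒴) (h₂ : U₂ ∈ 𝒴)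
    (h₁₂ : U₁ ≠ U₂) : (∀ U ∈ 𝒴, U ≤ U₁ ⊔ U₂) ∨ ∀ U ∈ 𝒴, U₁ ⊓ U₂ ≤ U := by
  by_contra! h
  obtain ⟨⟨U, hU, hUT⟩, U', hU', hWU'⟩ := h
  have trichotomy : ∀ U ∈ 𝒴, U ≠ U₁ → U ≠ U₂ → U₁ ⊓ U₂ ≤ U ∨ U ≤ U₁ ⊔ U₂ :=
    fun U hU hU₁ hU₂ => inf_le_or_le_sup_of_subAdj (h𝒴 h₁ h₂ h₁₂) (h𝒴 h₁ hU hU₁.symm)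
      (h𝒴 h₂ hU hU₂.symm)
  have hWU : U₁ ⊓ U₂ ≤ U := (trichotomy U hU (by rintro rfl; exact hUT le_sup_left)
    (by rintro rfl; exact hUT le_sup_right)).resolve_right hUT
  have hU'T : U' ≤ U₁ ⊔ U₂ := (trichotomy U' hU' (by rintro rfl; exact hWU' inf_le_left)
    (by rintro rfl; exact hWU' inf_le_right)).resolve_left hWU'
  have hUU' : U ≠ U' := by rintro rfl; exact hUT hU'T
  -- `U ⊓ U'` is a hyperplane of `U` inside the proper subspace `U ⊓ (U₁ ⊔ U₂)`, so they agree.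
  have heq : U ⊓ U' = U ⊓ (U₁ ⊔ U₂) := by
    refine Submodule.eq_of_le_of_finrank_le (inf_le_inf_left U hU'T) ?_
    have := Submodule.finrank_lt_finrank_of_lt (inf_lt_left.2 hUT)
    have := (h𝒴 hU hU' hUU').2
    omega
  exact hWU' <| (le_inf hWU (inf_le_left.trans le_sup_left)).trans (heq ▸ inf_le_right)

end Adjacency

def compls (F : Submodule K V) (m : ℕ) : Set (Submodule K V) :=
  {U | finrank K U = m ∧ ComplSub K V F U}

theorem notMem_of_mem_compls {F U : Submodule K V} {m : ℕ} (hU : U ∈ compls F m) {f : V}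
    (hf : f ∈ F) (hf0 : f ≠ 0) : f ∉ U := fun h => hf0 <| by
  simpa [hU.2.1] using Submodule.mem_inf.2 ⟨hf, h⟩

section Complements

variable [FiniteDimensional K V] {F : Submodule K V} {m : ℕ}

theorem finrank_add_of_mem_compls {U : Submodule K V} (hU : U ∈ compls F m) :
    finrank K F + m = finrank K V := by
  obtain ⟨hm, hinf, hsup⟩ := hU
  have := Submodule.finrank_sup_add_finrank_inf_eq F U
  rw [hinf, hsup, finrank_bot, finrank_top] at this
  omega

theorem mem_compls_iff (hF : finrank K F + m = finrank K V) {U : Submodule K V} :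
    U ∈ compls F m ↔ finrank K U = m ∧ F ⊓ U = ⊥ := by
  refine ⟨fun h => ⟨h.1, h.2.1⟩, fun ⟨hU, hFU⟩ => ⟨hU, hFU, ?_⟩⟩
  have := Submodule.finrank_sup_add_finrank_inf_eq F U
  rw [hFU, finrank_bot] at this
  exact Submodule.eq_top_iff_finrank_eq.2 (by omega)

theorem sup_span_mem_compls (hF : finrank K F + m = finrank K V) {W : Submodule K V}
    (hW : finrank K W + 1 = m) (hFW : F ⊓ W = ⊥) {v : V} (hv : v ∉ F ⊔ W) :
    W ⊔ K ∙ v ∈ compls F m := by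
  have h₁ := Submodule.finrank_sup_span_singleton fun h => hv (Submodule.mem_sup_right h)
  have h₂ := Submodule.finrank_sup_span_singleton hv
  have h₃ := Submodule.finrank_sup_add_finrank_inf_eq F W
  have h₄ := Submodule.finrank_sup_add_finrank_inf_eq F (W ⊔ K ∙ v)
  rw [hFW, finrank_bot] at h₃
  rw [← sup_assoc] at h₄
  exact (mem_compls_iff hF).2 ⟨by omega, Submodule.finrank_eq_zero.1 (by omega)⟩

theorem exists_mem_compls_le_sup_span_notMem {U : Submodule K V} (hU : U ∈ compls F m)
    {f w : V} (hf : f ∈ F) (hf0 : f ≠ 0) (hw : w ∈ U) (hw0 : w ≠ 0) :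
    ∃ U' ∈ compls F m, U' ≤ U ⊔ K ∙ f ∧ w ∉ U' := by
  have hwU : K ∙ w ≤ U := (Submodule.span_singleton_le_iff_mem w U).2 hw
  obtain ⟨W, hdisj, hsup⟩ := IsModularLattice.exists_disjoint_and_sup_eq hwU
  have hWU : W ≤ U := hsup ▸ le_sup_right
  have hW : finrank K W + 1 = m := by
    have := Submodule.finrank_sup_add_finrank_inf_eq (K ∙ w) W
    rw [hsup, disjoint_iff.1 hdisj, finrank_bot, finrank_span_singleton hw0, hU.1] at this
    omega
  have hFW : F ⊓ W = ⊥ := eq_bot_iff.2 (hU.2.1 ▸ inf_le_inf_left F hWU)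
  have hwFW : w ∉ F ⊔ W := fun h => hw0 <| by
    have hUFW : (W ⊔ F) ⊓ U = W := by
      rw [sup_inf_assoc_of_le F hWU, hU.2.1, sup_bot_eq]
    have : w ∈ K ∙ w ⊓ W :=
      ⟨Submodule.mem_span_singleton_self w, hUFW ▸ ⟨sup_comm F W ▸ h, hw⟩⟩
    simpa [disjoint_iff.1 hdisj] using this
  have hv : w + f ∉ F ⊔ W := fun h => hwFW <| by
    simpa using (F ⊔ W).sub_mem h (Submodule.mem_sup_left hf)
  have hU' := sup_span_mem_compls (finrank_add_of_mem_compls hU) hW hFW hv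
  refine ⟨_, hU', sup_le (hWU.trans le_sup_left) ?_, fun h => ?_⟩
  · exact (Submodule.span_singleton_le_iff_mem _ _).2 <|
      Submodule.add_mem _ (Submodule.mem_sup_left hw)
        (Submodule.mem_sup_right (Submodule.mem_span_singleton_self f))
  · have hv' : w + f ∈ W ⊔ K ∙ (w + f) :=
      Submodule.mem_sup_right (Submodule.mem_span_singleton_self _)
    exact notMem_of_mem_compls hU' hf hf0 (by simpa using Submodule.sub_mem _ hv' h)

end Complements

section TopsAndStars

variable [FiniteDimensional K V] {F T : Submodule K V} {m : ℕ}

theorem exists_mem_compls_le (hF : finrank K F + m = finrank K V)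
    (hT : finrank K T = m + 1) (hFT : F ⊔ T = ⊤) : ∃ U ∈ compls F m, U ≤ T := by
  obtain ⟨U, hdisj, hsup⟩ :=
    IsModularLattice.exists_disjoint_and_sup_eq (inf_le_right : F ⊓ T ≤ T)
  have hUT : U ≤ T := hsup ▸ le_sup_right
  have h₁ := Submodule.finrank_sup_add_finrank_inf_eq F T
  have h₂ := Submodule.finrank_sup_add_finrank_inf_eq (F ⊓ T) U
  rw [hFT, finrank_top] at h₁
  rw [hsup, disjoint_iff.1 hdisj, finrank_bot] at h₂
  refine ⟨U, (mem_compls_iff hF).2 ⟨by omega, ?_⟩, hUT⟩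
  rw [← disjoint_iff.1 hdisj, inf_assoc, inf_eq_right.2 hUT]

theorem exists_mem_ne_zero_of_sup_eq_top (hF : finrank K F + m = finrank K V)
    (hT : finrank K T = m + 1) (hFT : F ⊔ T = ⊤) : ∃ ℓ ∈ F ⊓ T, ℓ ≠ 0 := by
  refine Submodule.exists_mem_ne_zero_of_ne_bot fun h => ?_
  have := Submodule.finrank_sup_add_finrank_inf_eq F T
  rw [hFT, h, finrank_top, finrank_bot] at this
  omega

theorem compls_inter_Iic_nontrivial (hF : finrank K F + m = finrank K V)
    (hT : finrank K T = m + 1) (hFT : F ⊔ T = ⊤) (hm : 0 < m) :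
    (compls F m ∩ Set.Iic T).Nontrivial := by
  obtain ⟨U, hU, hUT⟩ := exists_mem_compls_le hF hT hFT
  obtain ⟨ℓ, hℓ, hℓ0⟩ := exists_mem_ne_zero_of_sup_eq_top hF hT hFT
  obtain ⟨w, hw, hw0⟩ := Submodule.exists_mem_ne_zero_of_finrank_pos (hU.1 ▸ hm)
  obtain ⟨U', hU', hU'le, hwU'⟩ := exists_mem_compls_le_sup_span_notMem hU hℓ.1 hℓ0 hw hw0
  refine ⟨U, ⟨hU, hUT⟩, U', ⟨hU', hU'le.trans (sup_le hUT ?_)⟩, fun h => hwU' (h ▸ hw)⟩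
  exact (Submodule.span_singleton_le_iff_mem _ _).2 hℓ.2

theorem le_of_forall_mem_Iic_subAdj (hF : finrank K F + m = finrank K V)
    (hT : finrank K T = m + 1) (hFT : F ⊔ T = ⊤) (hm : 2 ≤ m) {U' : Submodule K V}
    (hU' : U' ∈ compls F m) (hadj : ∀ U ∈ compls F m ∩ Set.Iic T, U ≠ U' → SubAdj K V U' U) :
    U' ≤ T := by
  by_contra hU'T
  have hlt := Submodule.finrank_lt_finrank_of_lt (inf_lt_left.2 hU'T)
  have hmeet : ∀ U ∈ compls F m ∩ Set.Iic T, U' ⊓ U = U' ⊓ T := fun U hU => by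
    have h := (hadj U hU fun h => hU'T (h ▸ hU.2)).2
    exact Submodule.eq_of_le_of_finrank_le (inf_le_inf_left U' hU.2) (by omega)
  obtain ⟨U, hU, hUT⟩ := exists_mem_compls_le hF hT hFT
  have hdim := (hadj U ⟨hU, hUT⟩ fun h => hU'T (h ▸ hUT)).2
  rw [hmeet U ⟨hU, hUT⟩, hU'.1] at hdim
  obtain ⟨w, hw, hw0⟩ :=
    Submodule.exists_mem_ne_zero_of_finrank_pos (by omega : 0 < finrank K ↥(U' ⊓ T))
  obtain ⟨ℓ, hℓ, hℓ0⟩ := exists_mem_ne_zero_of_sup_eq_top hF hT hFT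
  have hwU : w ∈ U := (hmeet U ⟨hU, hUT⟩ ▸ inf_le_right : U' ⊓ T ≤ U) hw
  obtain ⟨U₁, hU₁, hU₁le, hwU₁⟩ := exists_mem_compls_le_sup_span_notMem hU hℓ.1 hℓ0 hwU hw0
  have hU₁T : U₁ ≤ T :=
    hU₁le.trans (sup_le hUT ((Submodule.span_singleton_le_iff_mem _ _).2 hℓ.2))
  exact hwU₁ ((hmeet U₁ ⟨hU₁, hU₁T⟩ ▸ inf_le_right : U' ⊓ T ≤ U₁) hw)

theorem sup_ne_top_of_inf_eq_bot (hF : finrank K F + m = finrank K V)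
    (hT : finrank K T + 1 = m) (hFT : F ⊓ T = ⊥) : F ⊔ T ≠ ⊤ := fun h => by
  have := Submodule.finrank_sup_add_finrank_inf_eq F T
  rw [h, hFT, finrank_top, finrank_bot] at this
  omega

theorem compls_inter_Ici_nontrivial (hF : finrank K F + m = finrank K V)
    (hT : finrank K T + 1 = m) (hFT : F ⊓ T = ⊥) (hF0 : 0 < finrank K F) :
    (compls F m ∩ Set.Ici T).Nontrivial := by
  obtain ⟨v, hv⟩ := SetLike.exists_not_mem_of_ne_top _ (sup_ne_top_of_inf_eq_bot hF hT hFT)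
  obtain ⟨f, hf, hf0⟩ := Submodule.exists_mem_ne_zero_of_finrank_pos hF0
  have hvf : v + f ∉ F ⊔ T := fun h => hv <| by
    simpa using (F ⊔ T).sub_mem h (Submodule.mem_sup_left hf)
  have hU₁ := sup_span_mem_compls hF hT hFT hv
  have hU₂ := sup_span_mem_compls hF hT hFT hvf
  refine ⟨_, ⟨hU₁, Set.mem_Ici.2 le_sup_left⟩, _, ⟨hU₂, Set.mem_Ici.2 le_sup_left⟩, fun h => ?_⟩
  have hv' : v ∈ T ⊔ K ∙ v := Submodule.mem_sup_right (Submodule.mem_span_singleton_self _)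
  have hvf' : v + f ∈ T ⊔ K ∙ v := h ▸ Submodule.mem_sup_right (Submodule.mem_span_singleton_self _)
  exact notMem_of_mem_compls hU₁ hf hf0 (by simpa using (T ⊔ K ∙ v).sub_mem hvf' hv')

theorem ge_of_forall_mem_Ici_subAdj (hF : finrank K F + m = finrank K V)
    (hT : finrank K T + 1 = m) (hFT : F ⊓ T = ⊥) (hF2 : 2 ≤ finrank K F) {U' : Submodule K V}
    (hU' : U' ∈ compls F m) (hadj : ∀ U ∈ compls F m ∩ Set.Ici T, U ≠ U' → SubAdj K V U' U) :
    T ≤ U' := by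
  by_contra hTU'
  have hlt := Submodule.finrank_lt_finrank_of_lt (left_lt_sup.2 hTU')
  have hjoin : ∀ U ∈ compls F m ∩ Set.Ici T, U' ⊔ U = U' ⊔ T := fun U hU => by
    have h := (hadj U hU fun h => hTU' (h ▸ hU.2)).finrank_sup
    exact (Submodule.eq_of_le_of_finrank_le (sup_le_sup_left hU.2 U') (by omega)).symm
  have hFT' := sup_ne_top_of_inf_eq_bot hF hT hFT
  obtain ⟨v₀, hv₀⟩ := SetLike.exists_not_mem_of_ne_top _ hFT'
  have hU₀ : T ⊔ K ∙ v₀ ∈ compls F m ∩ Set.Ici T :=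
    ⟨sup_span_mem_compls hF hT hFT hv₀, Set.mem_Ici.2 le_sup_left⟩
  have hZ : U' ⊔ T ≠ ⊤ := fun h => by
    have := (hadj _ hU₀ fun h => hTU' (h ▸ hU₀.2)).finrank_sup
    rw [hjoin _ hU₀, h, finrank_top, hU'.1] at this
    omega
  obtain ⟨v, hvZ, hv⟩ := Submodule.exists_notMem_and_notMem hZ hFT'
  have hU : T ⊔ K ∙ v ∈ compls F m ∩ Set.Ici T :=
    ⟨sup_span_mem_compls hF hT hFT hv, Set.mem_Ici.2 le_sup_left⟩
  exact hvZ (hjoin _ hU ▸ Submodule.mem_sup_right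
    (Submodule.mem_sup_right (Submodule.mem_span_singleton_self v)))

theorem exists_top_or_star_of_pairwise {𝒴 : Set (Submodule K V)} (h𝒴 : 𝒴 ⊆ compls F m)
    (hpw : 𝒴.Pairwise (SubAdj K V)) (hnt : 𝒴.Nontrivial) :
    (∃ T : Submodule K V, finrank K T = m + 1 ∧ F ⊔ T = ⊤ ∧ 𝒴 ⊆ Set.Iic T) ∨
      ∃ T : Submodule K V, finrank K T + 1 = m ∧ F ⊓ T = ⊥ ∧ 𝒴 ⊆ Set.Ici T := by
  obtain ⟨U₁, h₁, U₂, h₂, h₁₂⟩ := hnt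
  have hadj := hpw h₁ h₂ h₁₂
  obtain ⟨hm, hinf, hsup⟩ := h𝒴 h₁
  rcases hpw.forall_le_sup_or_forall_inf_le h₁ h₂ h₁₂ with hle | hge
  · refine Or.inl ⟨U₁ ⊔ U₂, by rw [hadj.finrank_sup, hm], eq_top_iff.2 ?_, hle⟩
    exact hsup.ge.trans (sup_le_sup_left le_sup_left F)
  · refine Or.inr ⟨U₁ ⊓ U₂, by have := hadj.2; omega, eq_bot_iff.2 ?_, hge⟩
    exact hinf.le.trans' (inf_le_inf_left F inf_le_left)

end TopsAndStars

theorem PairAdj.symm {p q : Submodule K V × Submodule K V} (h : PairAdj K V p q) :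
    PairAdj K V q p := by
  rcases h with ⟨h₁, h₂⟩ | ⟨h₁, h₂⟩
  exacts [Or.inl ⟨h₁.symm, h₂.symm⟩, Or.inr ⟨h₁.symm, h₂.symm⟩]

theorem pairAdj_iff_of_fst_eq {p q : Submodule K V × Submodule K V} (h : p.1 = q.1) :
    PairAdj K V p q ↔ SubAdj K V p.2 q.2 := by
  refine ⟨?_, fun h' => Or.inl ⟨h, h'⟩⟩
  rintro (⟨-, h'⟩ | ⟨h', -⟩)
  exacts [h', absurd h h'.ne]

theorem PairAdj.fst_eq_of_snd_ne {p q r : Submodule K V × Submodule K V}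
    (hp : PairAdj K V r p) (hq : PairAdj K V r q) (h₁ : p.1 = q.1) (h₂ : p.2 ≠ q.2) :
    r.1 = p.1 := by
  rcases hp with ⟨h, -⟩ | ⟨-, hp⟩
  · exact h
  rcases hq with ⟨h, -⟩ | ⟨-, hq⟩
  · exact h.trans h₁.symm
  · exact absurd (hp.symm.trans hq) h₂

theorem IsMaxASubset.eq_of_subset {n k : ℕ} {X Y : Set (Submodule K V × Submodule K V)}
    (hX : IsMaxASubset K V n k X) (hY : IsASubset K V n k Y) (hXY : X ⊆ Y) : X = Y :=
  (Set.eq_or_ssubset_of_subset hXY).resolve_right fun h => hX.2 ⟨Y, hY, h⟩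

theorem isMaxASubset_of_saturated {n k : ℕ} {S : Submodule K V} {𝒴 : Set (Submodule K V)}
    (hS : finrank K S = k) (hpw : (compls S (n - k) ∩ 𝒴).Pairwise (SubAdj K V))
    (hnt : (compls S (n - k) ∩ 𝒴).Nontrivial)
    (hsat : ∀ U ∈ compls S (n - k),
      (∀ U' ∈ compls S (n - k) ∩ 𝒴, U' ≠ U → SubAdj K V U U') → U ∈ 𝒴) :
    IsMaxASubset K V n k {p ∈ GSet K V n k | p.1 = S ∧ p.2 ∈ 𝒴} := by
  have hmem : ∀ U ∈ compls S (n - k) ∩ 𝒴, (S, U) ∈ {p ∈ GSet K V n k | p.1 = S ∧ p.2 ∈ 𝒴} :=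
    fun U hU => ⟨⟨hS, hU.1⟩, rfl, hU.2⟩
  refine ⟨⟨fun p hp => hp.1, ?_⟩, ?_⟩
  · rintro p ⟨hpG, hp₁, hp₂⟩ q ⟨hqG, hq₁, hq₂⟩ hpq
    have h₁ : p.1 = q.1 := hp₁.trans hq₁.symm
    refine (pairAdj_iff_of_fst_eq h₁).2 (hpw ⟨hp₁ ▸ hpG.2, hp₂⟩ ⟨hq₁ ▸ hqG.2, hq₂⟩ ?_)
    exact fun h₂ => hpq (Prod.ext h₁ h₂)
  · rintro ⟨Y, ⟨hYG, hYadj⟩, hXY⟩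
    obtain ⟨r, hrY, hrX⟩ := Set.exists_of_ssubset hXY
    have hadj : ∀ U ∈ compls S (n - k) ∩ 𝒴, PairAdj K V r (S, U) := fun U hU =>
      hYadj r hrY _ (hXY.1 (hmem U hU)) fun h => hrX (h ▸ hmem U hU)
    obtain ⟨U₁, h₁, U₂, h₂, h₁₂⟩ := hnt
    have hr₁ : r.1 = S := (hadj U₁ h₁).fst_eq_of_snd_ne (hadj U₂ h₂) rfl h₁₂
    have hrG := hYG hrY
    refine hrX ⟨hrG, hr₁, hsat r.2 (hr₁ ▸ hrG.2) fun U hU _ => ?_⟩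
    exact (pairAdj_iff_of_fst_eq hr₁).1 (hadj U hU)

section Maximal

variable [FiniteDimensional K V]

theorem isMaxASubset_top {n k : ℕ} (hV : finrank K V = n) (hk : k + 2 ≤ n)
    {S T : Submodule K V} (hS : finrank K S = k) (hT : finrank K T = n - k + 1)
    (hST : S ⊔ T = ⊤) : IsMaxASubset K V n k {p ∈ GSet K V n k | p.1 = S ∧ p.2 ≤ T} := by
  have hF : finrank K S + (n - k) = finrank K V := by omega
  exact isMaxASubset_of_saturated (𝒴 := Set.Iic T) hS
    (fun U hU U' hU' hne => subAdj_of_le (hU.1.1.trans hU'.1.1.symm) (by rw [hT, hU.1.1])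
      hU.2 hU'.2 hne)
    (compls_inter_Iic_nontrivial hF hT hST (by omega))
    fun U hU => le_of_forall_mem_Iic_subAdj hF hT hST (by omega) hU

theorem isMaxASubset_star {n k : ℕ} (hV : finrank K V = n) (hk : 2 ≤ k) (hkn : k < n)
    {S T : Submodule K V} (hS : finrank K S = k) (hT : finrank K T = n - k - 1)
    (hST : S ⊓ T = ⊥) : IsMaxASubset K V n k {p ∈ GSet K V n k | p.1 = S ∧ T ≤ p.2} := by
  have hF : finrank K S + (n - k) = finrank K V := by omega
  have hT' : finrank K T + 1 = n - k := by omega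
  exact isMaxASubset_of_saturated (𝒴 := Set.Ici T) hS
    (fun U hU U' hU' hne => subAdj_of_ge (hU.1.1.trans hU'.1.1.symm) (by rw [hU.1.1, hT'])
      hU.2 hU'.2 hne)
    (compls_inter_Ici_nontrivial hF hT' hST (by omega))
    fun U hU => ge_of_forall_mem_Ici_subAdj hF hT' hST (by omega) hU

theorem GSet_nonempty {n k : ℕ} (hV : finrank K V = n) (hkn : k ≤ n) :
    (GSet K V n k).Nonempty := by
  obtain ⟨f, hf⟩ := exists_linearIndependent_of_le_finrank (R := K) (M := V) (hV ▸ hkn)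
  obtain ⟨U, hU⟩ := Submodule.exists_isCompl (Submodule.span K (Set.range f))
  have hS := finrank_span_eq_card hf
  have hU' := Submodule.finrank_add_eq_of_isCompl hU
  rw [Fintype.card_fin] at hS
  exact ⟨(_, U), hS, show finrank K U = n - k by omega, hU.inf_eq_bot, hU.sup_eq_top⟩

theorem exists_pairAdj {n k : ℕ} (hk : 0 < k) (hkn : k < n)
    {p : Submodule K V × Submodule K V} (hp : p ∈ GSet K V n k) :
    ∃ q ∈ GSet K V n k, q ≠ p ∧ PairAdj K V p q := by
  obtain ⟨f, hf, hf0⟩ := Submodule.exists_mem_ne_zero_of_finrank_pos (hp.1 ▸ hk)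
  obtain ⟨w, hw, hw0⟩ :=
    Submodule.exists_mem_ne_zero_of_finrank_pos (hp.2.1 ▸ Nat.sub_pos_of_lt hkn)
  obtain ⟨U, hU, hUle, hwU⟩ := exists_mem_compls_le_sup_span_notMem hp.2 hf hf0 hw hw0
  have hne : p.2 ≠ U := fun h => hwU (h ▸ hw)
  have hsup := Submodule.finrank_sup_span_singleton (notMem_of_mem_compls hp.2 hf hf0)
  refine ⟨(p.1, U), ⟨hp.1, hU⟩, fun h => hne (congrArg Prod.snd h).symm, ?_⟩
  exact (pairAdj_iff_of_fst_eq (p := p) (q := (p.1, U)) rfl).2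
    (subAdj_of_le (hp.2.1.trans hU.1.symm) hsup le_sup_left hUle hne)

theorem IsMaxASubset.nontrivial {n k : ℕ} (hV : finrank K V = n) (hk : 0 < k) (hkn : k < n)
    {X : Set (Submodule K V × Submodule K V)} (hX : IsMaxASubset K V n k X) : X.Nontrivial := by
  by_contra hX₁
  obtain ⟨p, hpG, hXp⟩ : ∃ p ∈ GSet K V n k, X ⊆ {p} := by
    rcases (Set.not_nontrivial_iff.1 hX₁).eq_empty_or_singleton with rfl | ⟨p, rfl⟩
    · obtain ⟨p, hp⟩ := GSet_nonempty hV hkn.le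
      exact ⟨p, hp, Set.empty_subset _⟩
    · exact ⟨p, hX.1.1 rfl, subset_rfl⟩
  obtain ⟨q, hqG, hqp, hpq⟩ := exists_pairAdj hk hkn hpG
  refine hX.2 ⟨{q, p}, ⟨Set.insert_subset hqG (Set.singleton_subset_iff.2 hpG), ?_⟩,
    hXp.trans_ssubset (Set.ssubset_insert (Set.mem_singleton_iff.not.2 hqp))⟩
  exact Set.pairwise_pair.2 fun _ => ⟨hpq.symm, hpq⟩

theorem IsMaxASubset.eq_top_or_star_of_fst_eq {n k : ℕ} (hV : finrank K V = n) (hk : 2 ≤ k)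
    (hkn : k + 2 ≤ n) {X : Set (Submodule K V × Submodule K V)} (hX : IsMaxASubset K V n k X)
    {p q : Submodule K V × Submodule K V} (hp : p ∈ X) (hq : q ∈ X) (hpq : p ≠ q)
    (h₁ : p.1 = q.1) :
    (∃ S T : Submodule K V, finrank K S = k ∧ finrank K T = n - k + 1 ∧
        S ⊔ T = ⊤ ∧ X = {p ∈ GSet K V n k | p.1 = S ∧ p.2 ≤ T}) ∨
      ∃ S T : Submodule K V, finrank K S = k ∧ finrank K T = n - k - 1 ∧
        S ⊓ T = ⊥ ∧ X = {p ∈ GSet K V n k | p.1 = S ∧ T ≤ p.2} := by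
  obtain ⟨hXG, hXadj⟩ := hX.1
  have h₂ : p.2 ≠ q.2 := fun h => hpq (Prod.ext h₁ h)
  have hfst : ∀ r ∈ X, r.1 = p.1 := fun r hr => by
    by_cases hrp : r = p
    · rw [hrp]
    by_cases hrq : r = q
    · rw [hrq, h₁]
    exact (hXadj r hr p hp hrp).fst_eq_of_snd_ne (hXadj r hr q hq hrq) h₁ h₂
  have hsub : Prod.snd '' X ⊆ compls p.1 (n - k) := by
    rintro _ ⟨r, hr, rfl⟩
    exact hfst r hr ▸ (hXG hr).2
  have hpw : (Prod.snd '' X).Pairwise (SubAdj K V) := by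
    rintro _ ⟨r, hr, rfl⟩ _ ⟨r', hr', rfl⟩ hne
    exact (pairAdj_iff_of_fst_eq ((hfst r hr).trans (hfst r' hr').symm)).1
      (hXadj r hr r' hr' fun h => hne (h ▸ rfl))
  have hS := (hXG hp).1
  rcases exists_top_or_star_of_pairwise hsub hpw
      ⟨p.2, ⟨p, hp, rfl⟩, q.2, ⟨q, hq, rfl⟩, h₂⟩ with ⟨T, hT, hST, hle⟩ | ⟨T, hT, hST, hge⟩
  · have hT' : finrank K T = n - k + 1 := by omega
    refine Or.inl ⟨p.1, T, hS, hT', hST, hX.eq_of_subset (isMaxASubset_top hV hkn hS hT' hST).1 ?_⟩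
    exact fun r hr => ⟨hXG hr, hfst r hr, hle ⟨r, hr, rfl⟩⟩
  · have hT' : finrank K T = n - k - 1 := by omega
    refine Or.inr ⟨p.1, T, hS, hT', hST,
      hX.eq_of_subset (isMaxASubset_star hV hk (by omega) hS hT' hST).1 ?_⟩
    exact fun r hr => ⟨hXG hr, hfst r hr, hge ⟨r, hr, rfl⟩⟩

end Maximal

section Swap

variable {n k l : ℕ}

theorem swap_mem_GSet (h : k + l = n) {p : Submodule K V × Submodule K V} :
    p.swap ∈ GSet K V n l ↔ p ∈ GSet K V n k := by
  simp only [GSet, ComplSub, Set.mem_ofPred_eq, Prod.fst_swap, Prod.snd_swap, inf_comm p.2,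
    sup_comm p.2]
  constructor <;> rintro ⟨h₁, h₂, h₃⟩ <;> exact ⟨by omega, by omega, h₃⟩

theorem pairAdj_swap {p q : Submodule K V × Submodule K V} :
    PairAdj K V p.swap q.swap ↔ PairAdj K V p q := by
  simp only [PairAdj, Prod.fst_swap, Prod.snd_swap]
  tauto

theorem isASubset_preimage_swap (h : k + l = n) {X : Set (Submodule K V × Submodule K V)} :
    IsASubset K V n l (Prod.swap ⁻¹' X) ↔ IsASubset K V n k X := by
  refine and_congr ⟨fun hX p hp => ?_, fun hX p hp => (swap_mem_GSet h).2 (hX hp)⟩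
    ⟨fun hX p hp q hq hpq => ?_, fun hX p hp q hq hpq => ?_⟩
  · exact (swap_mem_GSet h).1 (hX (by simpa using hp))
  · exact pairAdj_swap.1 (hX p.swap (by simpa using hp) q.swap (by simpa using hq) (by simpa))
  · exact pairAdj_swap.2 (hX p.swap hp q.swap hq (by simpa))

theorem isMaxASubset_preimage_swap (h : k + l = n) {X : Set (Submodule K V × Submodule K V)} :
    IsMaxASubset K V n l (Prod.swap ⁻¹' X) ↔ IsMaxASubset K V n k X := by
  have hinv : Function.Involutive (Prod.swap : Submodule K V × Submodule K V → _) :=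
    Prod.swap_swap
  have hssub : ∀ {A B : Set (Submodule K V × Submodule K V)}, A ⊂ B →
      Prod.swap ⁻¹' A ⊂ Prod.swap ⁻¹' B := fun hAB =>
    (Set.preimage_mono hAB.1).ssubset_of_ne
      fun h => hAB.ne (Set.preimage_injective.2 hinv.surjective h)
  refine and_congr (isASubset_preimage_swap h) (not_congr ⟨?_, ?_⟩)
  · rintro ⟨Y, hY, hXY⟩
    refine ⟨Prod.swap ⁻¹' Y, (isASubset_preimage_swap (by omega)).1 ?_, ?_⟩
    · rwa [hinv.preimage Y]
    · simpa only [hinv.preimage X] using hssub hXY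
  · rintro ⟨Y, hY, hXY⟩
    exact ⟨Prod.swap ⁻¹' Y, (isASubset_preimage_swap h).2 hY, hssub hXY⟩

theorem preimage_swap_sep (h : k + l = n) (P Q : Submodule K V → Prop) :
    Prod.swap ⁻¹' {p ∈ GSet K V n k | P p.1 ∧ Q p.2} = {p ∈ GSet K V n l | Q p.1 ∧ P p.2} := by
  ext p
  simp only [Set.mem_preimage, Set.mem_sep_iff, Prod.fst_swap, Prod.snd_swap,
    swap_mem_GSet (show l + k = n by omega), and_comm (a := P p.2)]

theorem eq_sep_of_preimage_swap_eq (h : k + l = n) {X : Set (Submodule K V × Submodule K V)}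
    {P Q : Submodule K V → Prop}
    (hX : Prod.swap ⁻¹' X = {p ∈ GSet K V n l | P p.1 ∧ Q p.2}) :
    X = {p ∈ GSet K V n k | Q p.1 ∧ P p.2} := by
  rw [← Function.Involutive.preimage Prod.swap_swap X, hX,
    preimage_swap_sep (show l + k = n by omega)]

end Swap

/-- For `1 < k < n - 1`, the maximal A-subsets of 𝒢 are exactly the four kinds of
sets 𝒢(S,T) and 𝒢(T,U) described in the paper. -/
theorem maximal_A_subsets
    {K V : Type*} [DivisionRing K] [AddCommGroup V] [Module K V]
    [FiniteDimensional K V] {n k : ℕ} (hV : finrank K V = n)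
    (hk1 : 1 < k) (hk2 : k < n - 1)
    (X : Set (Submodule K V × Submodule K V)) :
    IsMaxASubset K V n k X ↔
      ((∃ S T : Submodule K V, finrank K S = k ∧ finrank K T = n - k + 1 ∧
          S ⊔ T = ⊤ ∧ X = {p ∈ GSet K V n k | p.1 = S ∧ p.2 ≤ T}) ∨
       (∃ S T : Submodule K V, finrank K S = k ∧ finrank K T = n - k - 1 ∧
          S ⊓ T = ⊥ ∧ X = {p ∈ GSet K V n k | p.1 = S ∧ T ≤ p.2}) ∨
       (∃ T U : Submodule K V, finrank K T = k + 1 ∧ finrank K U = n - k ∧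
          T ⊔ U = ⊤ ∧ X = {p ∈ GSet K V n k | p.1 ≤ T ∧ p.2 = U}) ∨
       (∃ T U : Submodule K V, finrank K T = k - 1 ∧ finrank K U = n - k ∧
          T ⊓ U = ⊥ ∧ X = {p ∈ GSet K V n k | T ≤ p.1 ∧ p.2 = U})) := by
  have hkl : k + (n - k) = n := by omega
  constructor
  · intro hX
    obtain ⟨p, hp, q, hq, hpq⟩ := hX.nontrivial hV (by omega) (by omega)
    rcases hX.1.2 p hp q hq hpq with ⟨h₁, -⟩ | ⟨-, h₂⟩
    · exact or_assoc.1 (Or.inl (hX.eq_top_or_star_of_fst_eq hV (by omega) (by omega) hp hq hpq h₁))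
    · refine Or.inr (Or.inr ?_)
      rcases ((isMaxASubset_preimage_swap hkl).2 hX).eq_top_or_star_of_fst_eq hV (by omega)
        (by omega) (p := p.swap) (q := q.swap) (by simpa) (by simpa) (by simpa) h₂ with
        ⟨U, T, hU, hT, hUT, hX'⟩ | ⟨U, T, hU, hT, hUT, hX'⟩
      · exact Or.inl ⟨T, U, by omega, hU, sup_comm U T ▸ hUT,
          eq_sep_of_preimage_swap_eq hkl (P := (· = U)) (Q := (· ≤ T)) hX'⟩
      · exact Or.inr ⟨T, U, by omega, hU, inf_comm U T ▸ hUT,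
          eq_sep_of_preimage_swap_eq hkl (P := (· = U)) (Q := (T ≤ ·)) hX'⟩
  · rintro (⟨S, T, hS, hT, hST, rfl⟩ | ⟨S, T, hS, hT, hST, rfl⟩ | ⟨T, U, hT, hU, hTU, rfl⟩ |
      ⟨T, U, hT, hU, hTU, rfl⟩)
    · exact isMaxASubset_top hV (by omega) hS hT hST
    · exact isMaxASubset_star hV (by omega) (by omega) hS hT hST
    · rw [← isMaxASubset_preimage_swap hkl, preimage_swap_sep hkl (· ≤ T) (· = U)]
      exact isMaxASubset_top hV (by omega) hU (by omega) (sup_comm T U ▸ hTU)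
    · rw [← isMaxASubset_preimage_swap hkl, preimage_swap_sep hkl (T ≤ ·) (· = U)]
      exact isMaxASubset_star hV (by omega) (by omega) hU (by omega) (inf_comm T U ▸ hTU)
end

section
/- Any two elements (S,U) and (S',U') of G can be connected by a finite sequence (S,U) = (S₀,U₀), (S₁,U₁), …, (S_i,U_i) = (S',U') of elements of G in which consecutive terms are adjacent. -/
open Module

variable (K V : Type*) [DivisionRing K] [AddCommGroup V] [Module K V]

/-!
Fix a common complement `W` of `S` and `S'` (two subspaces of equal dimension always have one).
Then `(S, U) → (S, W) → (S', W) → (S', U')` reduces the theorem to: the complements of a fixed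
subspace `S` are connected under adjacency. Given complements `U ≠ U'` of `S`, pick `u' ∈ U' \ U`
and a hyperplane `N ⊇ S ⊔ (U ⊓ U')` missing `u'`; then `(U ⊓ N) ⊔ K u'` is again a complement
of `S`, adjacent to `U`, and meets `U'` in a strictly larger subspace than `U` does.
-/

open Relation Submodule

theorem Submodule.exists_notMem_notMem_of_ne_top {R M : Type*} [Ring R] [AddCommGroup M]
    [Module R M] {S T : Submodule R M} (hS : S ≠ ⊤) (hT : T ≠ ⊤) : ∃ v, v ∉ S ∧ v ∉ T := by
  obtain ⟨a, -, haS⟩ := SetLike.exists_of_lt (lt_top_iff_ne_top.mpr hS)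
  obtain ⟨b, -, hbT⟩ := SetLike.exists_of_lt (lt_top_iff_ne_top.mpr hT)
  by_cases haT : a ∈ T
  · by_cases hbS : b ∈ S
    · exact ⟨a + b, by rwa [S.add_mem_iff_left hbS], by rwa [T.add_mem_iff_right haT]⟩
    · exact ⟨b, hbS, hbT⟩
  · exact ⟨a, haS, haT⟩

variable {K V}

theorem complSub_iff_isCompl {S U : Submodule K V} : ComplSub K V S U ↔ IsCompl S U :=
  ⟨fun h => ⟨disjoint_iff.mpr h.1, codisjoint_iff.mpr h.2⟩, fun h => ⟨h.inf_eq_bot, h.sup_eq_top⟩⟩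

theorem subAdj_of_not_le {P T : Submodule K V} [FiniteDimensional K T]
    (hPT : finrank K P = finrank K T) (hTP : ¬T ≤ P) (h : finrank K P ≤ finrank K ↥(P ⊓ T) + 1) :
    SubAdj K V P T := by
  have := finrank_lt_finrank_of_lt (inf_lt_right.mpr hTP)
  exact ⟨hPT, by omega⟩

section FiniteDimensional

variable [FiniteDimensional K V]

theorem Submodule.exists_isCompl_isCompl_of_finrank_eq {S T : Submodule K V}
    (h : finrank K S = finrank K T) : ∃ W : Submodule K V, IsCompl S W ∧ IsCompl T W := by
  by_cases hS : S = ⊤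
  · have hT : T = ⊤ := eq_top_of_finrank_eq (by rw [← h, hS, finrank_top])
    exact ⟨⊥, hS ▸ isCompl_top_bot, hT ▸ isCompl_top_bot⟩
  have hT : T ≠ ⊤ := fun hT => hS (eq_top_of_finrank_eq (by rw [h, hT, finrank_top]))
  obtain ⟨v, hvS, hvT⟩ := exists_notMem_notMem_of_ne_top hS hT
  obtain ⟨W, hSW, hTW⟩ := exists_isCompl_isCompl_of_finrank_eq (S := S ⊔ K ∙ v) (T := T ⊔ K ∙ v)
    (by rw [finrank_sup_span_singleton hvS, finrank_sup_span_singleton hvT, h])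
  exact ⟨K ∙ v ⊔ W,
    (disjoint_span_singleton_of_notMem hvS).isCompl_sup_right_of_isCompl_sup_left hSW,
    (disjoint_span_singleton_of_notMem hvT).isCompl_sup_right_of_isCompl_sup_left hTW⟩
termination_by finrank K V - finrank K S
decreasing_by
  have := finrank_sup_span_singleton hvS
  have := (S ⊔ K ∙ v).finrank_le
  omega

theorem exists_isCompl_subAdj_finrank_inf_lt {S U U' : Submodule K V} (hU : IsCompl S U)
    (hU' : IsCompl S U') (hne : U ≠ U') :
    ∃ U'', IsCompl S U'' ∧ SubAdj K V U U'' ∧ finrank K ↥(U ⊓ U') < finrank K ↥(U'' ⊓ U') := by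
  have hrank : finrank K U = finrank K U' := by
    have := finrank_add_eq_of_isCompl hU
    have := finrank_add_eq_of_isCompl hU'
    omega
  obtain ⟨u', hu'U', hu'U⟩ : ∃ u' ∈ U', u' ∉ U := by
    by_contra! hle
    exact hne (eq_of_le_of_finrank_eq hle hrank.symm).symm
  have hmeet : (U ⊓ U' ⊔ S) ⊓ U' = U ⊓ U' := by
    rw [sup_inf_assoc_of_le S inf_le_right, hU'.inf_eq_bot, sup_bot_eq]
  have hdisj : Disjoint (U ⊓ U' ⊔ S) (K ∙ u') :=
    disjoint_span_singleton_of_notMem fun h => hu'U (hmeet.le ⟨h, hu'U'⟩).1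
  obtain ⟨N, hN_le, hN⟩ := hdisj.exists_isCompl
  have hSN : S ⊔ U ⊓ N = N := by
    rw [← sup_inf_assoc_of_le U (le_sup_right.trans hN_le), hU.sup_eq_top, top_inf_eq]
  have hU'' : IsCompl S (U ⊓ N ⊔ K ∙ u') :=
    (hU.disjoint.mono_right inf_le_left).isCompl_sup_right_of_isCompl_sup_left (by rwa [hSN])
  -- `N` is a hyperplane, so it cuts `U` in codimension at most one
  have hcodim : finrank K U ≤ finrank K ↥(U ⊓ N) + 1 := by
    have := finrank_sup_add_finrank_inf_eq U N
    have := finrank_add_eq_of_isCompl hN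
    have := (U ⊔ N).finrank_le
    have := finrank_span_singleton (K := K) (v := u') (fun h => hu'U (h ▸ U.zero_mem))
    omega
  refine ⟨U ⊓ N ⊔ K ∙ u', hU'', subAdj_of_not_le ?_ ?_ ?_, finrank_lt_finrank_of_lt ?_⟩
  · have := finrank_add_eq_of_isCompl hU
    have := finrank_add_eq_of_isCompl hU''
    omega
  · exact fun hle => hu'U (hle (mem_sup_right (mem_span_singleton_self u')))
  · have := finrank_mono (le_inf inf_le_left le_sup_left : U ⊓ N ≤ U ⊓ (U ⊓ N ⊔ K ∙ u'))
    omega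
  · have hle : U ⊓ U' ≤ U ⊓ N := le_inf inf_le_left (le_sup_left.trans hN_le)
    refine SetLike.lt_iff_le_and_exists.mpr ⟨le_inf (hle.trans le_sup_left) inf_le_right, u',
      mem_inf.mpr ⟨mem_sup_right (mem_span_singleton_self u'), hu'U'⟩,
      fun h => hu'U (mem_inf.mp h).1⟩

theorem reflTransGen_subAdj_of_isCompl {S : Submodule K V}
    (U U' : {U : Submodule K V // IsCompl S U}) :
    ReflTransGen (fun A B : {U : Submodule K V // IsCompl S U} => SubAdj K V A.1 B.1) U U' := by
  by_cases hne : U.1 = U'.1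
  · rw [Subtype.ext hne]
  obtain ⟨U'', hU'', hadj, hlt⟩ := exists_isCompl_subAdj_finrank_inf_lt U.2 U'.2 hne
  exact .head hadj (reflTransGen_subAdj_of_isCompl ⟨U'', hU''⟩ U')
termination_by finrank K U'.1 - finrank K ↥(U.1 ⊓ U'.1)
decreasing_by
  have := finrank_mono (inf_le_right : U'' ⊓ U'.1 ≤ U'.1)
  omega

namespace GSet

variable {n k : ℕ}

theorem mem_of_isCompl {S U S' U' : Submodule K V} (h : (S, U) ∈ GSet K V n k)
    (hc : IsCompl S' U') (hk : finrank K S' = k) : (S', U') ∈ GSet K V n k := by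
  refine ⟨hk, ?_, complSub_iff_isCompl.mpr hc⟩
  have hSU : IsCompl S U := complSub_iff_isCompl.mp h.2.2
  have := finrank_add_eq_of_isCompl hSU
  have := finrank_add_eq_of_isCompl hc
  have : finrank K S = k := h.1
  have : finrank K U = n - k := h.2.1
  show finrank K U' = n - k
  omega

theorem reflTransGen_of_fst_eq {p q : GSet K V n k} (h : p.1.1 = q.1.1) :
    ReflTransGen (fun a b : GSet K V n k => PairAdj K V a.val b.val) p q := by
  obtain ⟨⟨S, U⟩, hp⟩ := p
  obtain ⟨⟨S', U'⟩, hq⟩ := q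
  obtain rfl : S = S' := h
  let f (A : {A : Submodule K V // IsCompl S A}) : GSet K V n k :=
    ⟨(S, A.1), mem_of_isCompl hp A.2 hp.1⟩
  exact (reflTransGen_subAdj_of_isCompl ⟨U, complSub_iff_isCompl.mp hp.2.2⟩
    ⟨U', complSub_iff_isCompl.mp hq.2.2⟩).lift f fun _ _ hAB => Or.inl ⟨rfl, hAB⟩

theorem reflTransGen_of_snd_eq {p q : GSet K V n k} (h : p.1.2 = q.1.2) :
    ReflTransGen (fun a b : GSet K V n k => PairAdj K V a.val b.val) p q := by
  obtain ⟨⟨S, U⟩, hp⟩ := p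
  obtain ⟨⟨S', U'⟩, hq⟩ := q
  obtain rfl : U = U' := h
  have hSU : IsCompl S U := complSub_iff_isCompl.mp hp.2.2
  let f (A : {A : Submodule K V // IsCompl U A}) : GSet K V n k :=
    ⟨(A.1, U), mem_of_isCompl hp A.2.symm (by
      have := finrank_add_eq_of_isCompl hSU
      have := finrank_add_eq_of_isCompl A.2.symm
      have : finrank K S = k := hp.1
      omega)⟩
  exact (reflTransGen_subAdj_of_isCompl ⟨S, hSU.symm⟩
    ⟨S', (complSub_iff_isCompl.mp hq.2.2).symm⟩).lift f fun _ _ hAB => Or.inr ⟨hAB, rfl⟩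

end GSet

end FiniteDimensional

theorem G_connected_general
    {K V : Type*} [DivisionRing K] [AddCommGroup V] [Module K V]
    [FiniteDimensional K V] {n k : ℕ} (p q : GSet K V n k) :
    Relation.ReflTransGen
      (fun a b : GSet K V n k => PairAdj K V a.val b.val) p q := by
  obtain ⟨⟨S, U⟩, hp⟩ := p
  obtain ⟨⟨S', U'⟩, hq⟩ := q
  obtain ⟨W, hSW, hS'W⟩ := exists_isCompl_isCompl_of_finrank_eq (hp.1.trans hq.1.symm)
  let SW : GSet K V n k := ⟨(S, W), GSet.mem_of_isCompl hp hSW hp.1⟩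
  let S'W : GSet K V n k := ⟨(S', W), GSet.mem_of_isCompl hp hS'W hq.1⟩
  exact ((GSet.reflTransGen_of_fst_eq (p := ⟨(S, U), hp⟩) (q := SW) rfl).trans
    (GSet.reflTransGen_of_snd_eq (q := S'W) rfl)).trans
    (GSet.reflTransGen_of_fst_eq (q := ⟨(S', U'), hq⟩) rfl)

/-- Any two elements of 𝒢 can be connected by a finite sequence of elements of 𝒢
in which consecutive terms are adjacent. -/
theorem G_connected
    {K V : Type*} [DivisionRing K] [AddCommGroup V] [Module K V]
    [FiniteDimensional K V] {n k : ℕ} (hn : 2 ≤ n) (hV : finrank K V = n)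
    (hk1 : 1 ≤ k) (hk2 : k ≤ n - 1) (p q : GSet K V n k) :
    Relation.ReflTransGen
      (fun a b : GSet K V n k => PairAdj K V a.val b.val) p q :=
  G_connected_general p q
end
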